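/- Let α and β be types and let A : α → β → ℂ be a matrix of coefficients such that for every a : α the function A a has finite support and ∑' b, ‖A a b‖ = 1. Then for every element e of the ℓ¹ space lp (fun _ : α => ℂ) 1 the following hold: (i) for every b : β the function a ↦ e a * A a b is summable; (ii) the function b ↦ ∑' a, e a * A a b is an element of lp (fun _ : β => ℂ) 1; and (iii) its ℓ¹ norm is at most the ℓ¹ norm of e. (This is the absolute-convergence and boundedness computation by which an iso, sending each closed value v of type a to a finite linear combination W_v of closed values of type b whose coefficients have absolute values summing to 1, induces a well-defined bounded linear map.) -/

import Mathlib

/-!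
Bound the double series `∑_{a,b} ‖e a‖ ‖A a b‖` by summing over `b` first: each row contributes
at most `‖e a‖`, so the double series converges with sum at most `‖e‖₁`. Absolute convergence then
lets us sum over `a` first, which gives the summability of every column `a ↦ e a * A a b`, and the
triangle inequality bounds `∑_b ‖∑_a e a * A a b‖` by the same double series.
-/

section NonnegKernel

variable {α β : Type*} {f : α → ℝ} {K : α → β → ℝ} {C : ℝ}

theorem tsum_mul_le_mul_of_tsum_le (hf0 : ∀ a, 0 ≤ f a) (hKC : ∀ a, ∑' b, K a b ≤ C) (a : α) :
    ∑' b, f a * K a b ≤ f a * C := by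
  rw [tsum_mul_left]
  exact mul_le_mul_of_nonneg_left (hKC a) (hf0 a)

theorem summable_mul_uncurry_of_tsum_le (hf0 : ∀ a, 0 ≤ f a) (hK0 : ∀ a b, 0 ≤ K a b)
    (hf : Summable f) (hK : ∀ a, Summable (K a)) (hKC : ∀ a, ∑' b, K a b ≤ C) :
    Summable fun q : α × β => f q.1 * K q.1 q.2 := by
  rw [summable_prod_of_nonneg fun q => mul_nonneg (hf0 q.1) (hK0 q.1 q.2)]
  refine ⟨fun a => (hK a).mul_left (f a), (hf.mul_right C).of_nonneg_of_le
    (fun a => tsum_nonneg fun b => mul_nonneg (hf0 a) (hK0 a b))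
    (tsum_mul_le_mul_of_tsum_le hf0 hKC)⟩

theorem tsum_tsum_mul_le_of_tsum_le (hf0 : ∀ a, 0 ≤ f a) (hK0 : ∀ a b, 0 ≤ K a b)
    (hf : Summable f) (hK : ∀ a, Summable (K a)) (hKC : ∀ a, ∑' b, K a b ≤ C) :
    ∑' b, ∑' a, f a * K a b ≤ C * ∑' a, f a := by
  have H := summable_mul_uncurry_of_tsum_le hf0 hK0 hf hK hKC
  calc ∑' b, ∑' a, f a * K a b = ∑' a, ∑' b, f a * K a b :=
        Summable.tsum_comm (f := fun a b => f a * K a b) H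
    _ ≤ ∑' a, f a * C :=
        H.prod.tsum_le_tsum (tsum_mul_le_mul_of_tsum_le hf0 hKC) (hf.mul_right C)
    _ = C * ∑' a, f a := by rw [tsum_mul_right, mul_comm]

end NonnegKernel

section NormedRing

variable {α β 𝕜 : Type*} [NormedRing 𝕜] {A : α → β → 𝕜} {e : α → 𝕜} {C : ℝ}

theorem summable_norm_mul_norm_of_tsum_le (hA : ∀ a, Summable fun b => ‖A a b‖)
    (hAC : ∀ a, ∑' b, ‖A a b‖ ≤ C) (he : Summable fun a => ‖e a‖) :
    Summable fun q : β × α => ‖e q.2‖ * ‖A q.2 q.1‖ :=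
  (summable_mul_uncurry_of_tsum_le (fun _ => norm_nonneg _) (fun _ _ => norm_nonneg _) he hA
    hAC).prod_symm

theorem summable_norm_mul_of_summable_norm_mul_norm {e g : α → 𝕜}
    (h : Summable fun a => ‖e a‖ * ‖g a‖) : Summable fun a => ‖e a * g a‖ :=
  h.of_nonneg_of_le (fun _ => norm_nonneg _) fun _ => norm_mul_le _ _

theorem norm_tsum_mul_le_tsum_norm_mul {e g : α → 𝕜} (h : Summable fun a => ‖e a‖ * ‖g a‖) :
    ‖∑' a, e a * g a‖ ≤ ∑' a, ‖e a‖ * ‖g a‖ := by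
  have hs := summable_norm_mul_of_summable_norm_mul_norm h
  calc ‖∑' a, e a * g a‖ ≤ ∑' a, ‖e a * g a‖ := norm_tsum_le_tsum_norm hs
    _ ≤ ∑' a, ‖e a‖ * ‖g a‖ := hs.tsum_le_tsum (fun _ => norm_mul_le _ _) h

theorem summable_norm_tsum_mul_of_tsum_le (hA : ∀ a, Summable fun b => ‖A a b‖)
    (hAC : ∀ a, ∑' b, ‖A a b‖ ≤ C) (he : Summable fun a => ‖e a‖) :
    Summable fun b => ‖∑' a, e a * A a b‖ :=
  have H := summable_norm_mul_norm_of_tsum_le hA hAC he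
  H.prod.of_nonneg_of_le (fun _ => norm_nonneg _) fun b =>
    norm_tsum_mul_le_tsum_norm_mul (H.prod_factor b)

theorem tsum_norm_tsum_mul_le (hA : ∀ a, Summable fun b => ‖A a b‖)
    (hAC : ∀ a, ∑' b, ‖A a b‖ ≤ C) (he : Summable fun a => ‖e a‖) :
    ∑' b, ‖∑' a, e a * A a b‖ ≤ C * ∑' a, ‖e a‖ := by
  have H := summable_norm_mul_norm_of_tsum_le hA hAC he
  calc ∑' b, ‖∑' a, e a * A a b‖ ≤ ∑' b, ∑' a, ‖e a‖ * ‖A a b‖ :=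
        (summable_norm_tsum_mul_of_tsum_le hA hAC he).tsum_le_tsum
          (fun b => norm_tsum_mul_le_tsum_norm_mul (H.prod_factor b)) H.prod
    _ ≤ C * ∑' a, ‖e a‖ :=
        tsum_tsum_mul_le_of_tsum_le (fun _ => norm_nonneg _) (fun _ _ => norm_nonneg _) he hA hAC

end NormedRing

section lp

open scoped lp

variable {α E : Type*} [NormedAddCommGroup E]

theorem lp.norm_eq_tsum_norm_of_one (f : ℓ¹(α, E)) : ‖f‖ = ∑' i, ‖f i‖ := by
  simp [lp.norm_eq_tsum_rpow (by norm_num : 0 < (1 : ENNReal).toReal)]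

theorem lp.summable_norm_of_one (f : ℓ¹(α, E)) : Summable fun i => ‖f i‖ := by
  simpa using (lp.memℓp f).summable

theorem memℓp_one_of_summable_norm {f : α → E} (hf : Summable fun i => ‖f i‖) : Memℓp f 1 :=
  memℓp_gen (by simpa using hf)

end lp

theorem stmt0_general {α β : Type*} (A : α → β → ℂ)
    (hnorm : ∀ a, ∑' b, ‖A a b‖ = 1)
    (e : lp (fun _ : α => ℂ) 1) :
    (∀ b : β, Summable (fun a : α => e a * A a b)) ∧
    ∃ hmem : Memℓp (fun b : β => ∑' a : α, e a * A a b) 1,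
      ‖(⟨fun b : β => ∑' a : α, e a * A a b, hmem⟩ : lp (fun _ : β => ℂ) 1)‖ ≤ ‖e‖ := by
  -- A non-summable series has `tsum` equal to `0`, not `1`.
  have hA : ∀ a, Summable fun b => ‖A a b‖ := fun a =>
    by_contra fun h => by simpa [tsum_eq_zero_of_not_summable h] using hnorm a
  have hAC : ∀ a, ∑' b, ‖A a b‖ ≤ 1 := fun a => (hnorm a).le
  have he := lp.summable_norm_of_one e
  refine ⟨fun b => (summable_norm_mul_of_summable_norm_mul_norm
      ((summable_norm_mul_norm_of_tsum_le hA hAC he).prod_factor b)).of_norm,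
    memℓp_one_of_summable_norm (summable_norm_tsum_mul_of_tsum_le hA hAC he), ?_⟩
  rw [lp.norm_eq_tsum_norm_of_one, lp.norm_eq_tsum_norm_of_one, ← one_mul (∑' a, ‖e a‖)]
  exact tsum_norm_tsum_mul_le hA hAC he

/-- An iso sending each closed value `a` to a finite linear combination
with coefficients whose absolute values sum to 1 induces a well-defined bounded
linear operation on `ℓ¹`. -/
theorem stmt0 {α β : Type*} (A : α → β → ℂ)
    (hfin : ∀ a, (Function.support (A a)).Finite)
    (hnorm : ∀ a, ∑' b, ‖A a b‖ = 1)
    (e : lp (fun _ : α => ℂ) 1) :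
    (∀ b : β, Summable (fun a : α => e a * A a b)) ∧
    ∃ hmem : Memℓp (fun b : β => ∑' a : α, e a * A a b) 1,
      ‖(⟨fun b : β => ∑' a : α, e a * A a b, hmem⟩ : lp (fun _ : β => ℂ) 1)‖ ≤ ‖e‖ :=
  stmt0_general A hnorm e
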